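/- For a collection C = (x_1, ..., x_r) with r odd and a positive integer a coprime to every period length of C, if b is a period length of C then b is also a period length of the scaled collection aC = (a·x_1, ..., a·x_r): given a purely periodic solution of period b for C, the sequence F defined on each residue class mod a by independent period-b solutions of C satisfies the aC recurrence. -/

import Mathlib

open Finset

/-- `p` is a period length for the collection of positions `x`:
the minimal period of some nonzero purely periodic solution of the
recurrence determined by the shift collection `∂x`. -/
def IsPeriodLen (r : ℕ) [NeZero r] (x : Fin r → ℕ) (p : ℕ) : Prop :=
  0 < p ∧ ∃ L : ℕ → ZMod 2, L ≠ 0 ∧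
    (∀ i, (∀ l, x l - x 0 ≤ i) →
      L i = ∑ l ∈ Finset.univ.erase (0 : Fin r), L (i - (x l - x 0))) ∧
    (∀ i, L (i + p) = L i) ∧
    ∀ d, 0 < d → (∀ i, L (i + d) = L i) → p ≤ d

/-!
Let `L` be a solution of the `x`-recurrence with minimal period `b`, and pick `c` with
`c * a ≡ 1 [MOD b]`. Then `F n := L (c * n)` solves the `a * x`-recurrence: on the residue
class of `i` modulo `a` it reads `F (a * n + i) = L (n + c * i)` up to a multiple of `b`, a
shifted copy of `L`. It keeps period `b`, and any period `d` of `F` is one of `L`, because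
`L m = F (a * m)`; so `b` is again the minimal period.
-/

def SatisfiesRecurrence {α : Type*} [AddCommMonoid α] {r : ℕ} [NeZero r] (x : Fin r → ℕ)
    (L : ℕ → α) : Prop :=
  ∀ i, (∀ l, x l - x 0 ≤ i) → L i = ∑ l ∈ univ.erase (0 : Fin r), L (i - (x l - x 0))

lemma Nat.exists_pos_mul_modEq_one {a b : ℕ} (ha : 0 < a) (hb : 0 < b) (hab : a.Coprime b) :
    ∃ c, 0 < c * a ∧ c * a ≡ 1 [MOD b] := by
  obtain ⟨m, -, hm⟩ := Nat.exists_mul_mod_eq_of_coprime 1 hab hb.ne'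
  refine ⟨m + b, Nat.mul_pos (by omega) ha, ?_⟩
  calc (m + b) * a ≡ m * a [MOD b] := by simp [Nat.ModEq, add_mul]
    _ ≡ 1 [MOD b] := by rw [mul_comm]; exact hm

lemma Nat.ModEq.mul_mul_of_mul_modEq_one {a b c : ℕ} (hca : c * a ≡ 1 [MOD b]) (m : ℕ) :
    c * (a * m) ≡ m [MOD b] := by
  simpa only [mul_assoc, one_mul] using hca.mul_right m

namespace Function.Periodic

variable {α : Type*} {f : ℕ → α} {a b c : ℕ}

lemma eq_of_modEq (hf : Periodic f b) {m n : ℕ} (h : m ≡ n [MOD b]) : f m = f n := by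
  rw [← hf.map_mod_nat m, h, hf.map_mod_nat]

lemma comp_nat_mul_left (hf : Periodic f b) (c : ℕ) : Periodic (fun n ↦ f (c * n)) b :=
  fun n ↦ by simpa only [mul_add, Nat.cast_id] using hf.nat_mul c (c * n)

lemma comp_mul_mul_of_modEq (hf : Periodic f b) (hca : c * a ≡ 1 [MOD b]) (m : ℕ) :
    f (c * (a * m)) = f m :=
  hf.eq_of_modEq (hca.mul_mul_of_mul_modEq_one m)

lemma of_comp_mul_of_modEq (hf : Periodic f b) (hca : c * a ≡ 1 [MOD b]) {d : ℕ}
    (hd : Periodic (fun n ↦ f (c * n)) d) : Periodic f d := fun m ↦ by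
  rw [← hf.comp_mul_mul_of_modEq hca, ← hf.comp_mul_mul_of_modEq hca m, mul_add]
  exact hd.nat_mul a (a * m)

lemma comp_mul_ne_zero [Zero α] (hf : Periodic f b) (hca : c * a ≡ 1 [MOD b]) (hf0 : f ≠ 0) :
    (fun n ↦ f (c * n)) ≠ 0 := fun h ↦
  hf0 <| funext fun m ↦ by rw [← hf.comp_mul_mul_of_modEq hca m]; exact congrFun h (a * m)

lemma comp_mul_sub_mul (hf : Periodic f b) (hca : c * a ≡ 1 [MOD b]) {i D : ℕ}
    (hi : a * D ≤ i) (hD : D ≤ c * i) : f (c * (i - a * D)) = f (c * i - D) := by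
  refine hf.eq_of_modEq (Nat.ModEq.add_right_cancel (hca.mul_mul_of_mul_modEq_one D) ?_)
  rw [← mul_add, Nat.sub_add_cancel hi, Nat.sub_add_cancel hD]

lemma satisfiesRecurrence_comp_mul [AddCommMonoid α] {r : ℕ} [NeZero r] {x : Fin r → ℕ}
    (hf : Periodic f b) (hca : c * a ≡ 1 [MOD b]) (hca_pos : 0 < c * a)
    (hrec : SatisfiesRecurrence x f) :
    SatisfiesRecurrence (fun l ↦ a * x l) (fun n ↦ f (c * n)) := by
  intro i hi
  dsimp only at hi ⊢
  have hshift (l : Fin r) : a * x l - a * x 0 = a * (x l - x 0) := (Nat.mul_sub a _ _).symm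
  have hle (l : Fin r) : x l - x 0 ≤ c * i :=
    calc x l - x 0 ≤ c * a * (x l - x 0) := Nat.le_mul_of_pos_left _ hca_pos
      _ ≤ c * i := by rw [mul_assoc, ← hshift]; exact Nat.mul_le_mul_left c (hi l)
  rw [hrec (c * i) hle]
  refine sum_congr rfl fun l _ ↦ ?_
  rw [hshift, hf.comp_mul_sub_mul hca (hshift l ▸ hi l) (hle l)]

end Function.Periodic

theorem stmt17_general (r a b : ℕ) [NeZero r] (ha : 0 < a)
    (x : Fin r → ℕ)
    (hcop : ∀ p, IsPeriodLen r x p → Nat.Coprime a p)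
    (hb : IsPeriodLen r x b) :
    IsPeriodLen r (fun i => a * x i) b := by
  obtain ⟨c, hca_pos, hca⟩ := Nat.exists_pos_mul_modEq_one ha hb.1 (hcop b hb)
  obtain ⟨hb_pos, L, hL0, hrec, hper, hmin⟩ := hb
  replace hper : Function.Periodic L b := hper
  exact ⟨hb_pos, fun n ↦ L (c * n), hper.comp_mul_ne_zero hca hL0,
    hper.satisfiesRecurrence_comp_mul hca hca_pos hrec, hper.comp_nat_mul_left c,
    fun d hd hFd ↦ hmin d hd (hper.of_comp_mul_of_modEq hca hFd)⟩

theorem stmt17 (r a b : ℕ) [NeZero r] (hodd : Odd r) (ha : 0 < a)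
    (x : Fin r → ℕ) (hmono : StrictMono x)
    (hcop : ∀ p, IsPeriodLen r x p → Nat.Coprime a p)
    (hb : IsPeriodLen r x b) :
    IsPeriodLen r (fun i => a * x i) b :=
  stmt17_general r a b ha x hcop hb
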